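/- Let n ∈ ℤ₊, λ = 3n, k = λ², let 2 ≤ p ≤ 3, and let M > 0, δ > 0. Let x* = (x₁*, x₂*) with x₁* > 0, x₂* > 0 and assume 2/λ < min(δ, x₁*, x₂*). Let g : ℝ² → ℝ be a C¹ function with |∂₂g(x)| > M for all x ∈ B(x*, δ) and with ∂₂g bounded on B(x*, 2). Then ‖ (∂₁β_{k,λ}) · (∂₂g) ‖_{L^p(ℝ²)} ≥ c M k^{1/2} λ^{-1} − k^{-1/2} ‖∂₁ρ‖_{L^p(B(0,2))} · sup_{x ∈ B(x*,2)} |∂₂g(x)|, where c > 0 is an absolute constant (one may take c = 1/2). -/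

import Mathlib

open Real MeasureTheory
open scoped ENNReal

noncomputable section

/-- The plane `ℝ²` with the Euclidean norm. -/
abbrev E2 := EuclideanSpace ℝ (Fin 2)

/-- Sign `±1` attached to a boolean. -/
def sgn (b : Bool) : ℝ := if b then 1 else -1

/-- The point `(a, b) ∈ ℝ²`. -/
def vec2 (a b : ℝ) : E2 := WithLp.toLp 2 ![a, b]

/-- The reflected points `x*_ε = (ε₁ x₁*, ε₂ x₂*)`. -/
def xStarSign (xs : E2) (ε : Bool × Bool) : E2 :=
  vec2 (sgn ε.1 * xs 0) (sgn ε.2 * xs 1)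

/-- `β_{k,λ}(x) = (λ^{−1+2/p}/√k) Σ_{ε₁,ε₂=±1} ε₁ε₂ ρ(λ(x − x*_ε)) sin(k x₁)`. -/
noncomputable def betaKL (xs : E2) (ρ : E2 → ℝ) (k : ℕ) (l p : ℝ) (x : E2) : ℝ :=
  l ^ (-1 + 2/p) / Real.sqrt k *
    ∑ ε : Bool × Bool,
      sgn ε.1 * sgn ε.2 * ρ (l • (x - xStarSign xs ε)) * Real.sin (k * x 0)

/-- The `i`-th partial derivative of a scalar function on `ℝ²`. -/
noncomputable def pd (f : E2 → ℝ) (x : E2) (i : Fin 2) : ℝ :=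
  fderiv ℝ f x (EuclideanSpace.single i 1)

/- ### Auxiliary lemmas -/

lemma cos4_integral_lower (K a b : ℝ) (hK : 0 < K) (hab : a ≤ b) :
    3/8*(b-a) - 9/(16*K) ≤ ∫ t in a..b, Real.cos (K*t)^4 := by
  have hKne : K ≠ 0 := ne_of_gt hK
  set F : ℝ → ℝ := fun t => 3/8*t + Real.sin (2*K*t)/(4*K) + Real.sin (4*K*t)/(32*K) with hF
  have hderiv : ∀ t ∈ Set.uIcc a b, HasDerivAt F (Real.cos (K*t)^4) t := by
    intro t _
    have h1 : HasDerivAt (fun t : ℝ => 3/8*t) (3/8) t := by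
      simpa using (hasDerivAt_id t).const_mul (3/8 : ℝ)
    have h2 : HasDerivAt (fun t : ℝ => Real.sin (2*K*t)/(4*K))
        (Real.cos (2*K*t) * (2*K) / (4*K)) t := by
      have : HasDerivAt (fun t : ℝ => 2*K*t) (2*K) t := by
        simpa using (hasDerivAt_id t).const_mul (2*K)
      exact ((Real.hasDerivAt_sin (2*K*t)).comp t this).div_const (4*K)
    have h4 : HasDerivAt (fun t : ℝ => Real.sin (4*K*t)/(32*K))
        (Real.cos (4*K*t) * (4*K) / (32*K)) t := by
      have : HasDerivAt (fun t : ℝ => 4*K*t) (4*K) t := by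
        simpa using (hasDerivAt_id t).const_mul (4*K)
      exact ((Real.hasDerivAt_sin (4*K*t)).comp t this).div_const (32*K)
    have := (h1.add h2).add h4
    refine (this.congr_deriv ?_ : HasDerivAt F _ t)
    have e2 : Real.cos (2*K*t) = 2 * Real.cos (K*t)^2 - 1 := by
      have := Real.cos_two_mul (K*t); rw [show 2*K*t = 2*(K*t) by ring] at *; linarith
    have e4 : Real.cos (4*K*t) = 2 * Real.cos (2*K*t)^2 - 1 := by
      have := Real.cos_two_mul (2*K*t); rw [show 4*K*t = 2*(2*K*t) by ring] at *; linarith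
    rw [e4, e2]; field_simp; ring
  have hint : IntervalIntegrable (fun t => Real.cos (K*t)^4) volume a b := by
    apply Continuous.intervalIntegrable; continuity
  have heval := intervalIntegral.integral_eq_sub_of_hasDerivAt hderiv hint
  rw [heval]
  have s1 := Real.neg_one_le_sin (2*K*b); have s2 := Real.sin_le_one (2*K*b)
  have s3 := Real.neg_one_le_sin (2*K*a); have s4 := Real.sin_le_one (2*K*a)
  have s5 := Real.neg_one_le_sin (4*K*b); have s6 := Real.sin_le_one (4*K*b)
  have s7 := Real.neg_one_le_sin (4*K*a); have s8 := Real.sin_le_one (4*K*a)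
  have e : F b - F a = 3/8*(b-a) + (Real.sin (2*K*b) - Real.sin (2*K*a))/(4*K)
      + (Real.sin (4*K*b) - Real.sin (4*K*a))/(32*K) := by
    simp only [hF]; field_simp; ring
  have d1 : (-2:ℝ)/(4*K) ≤ (Real.sin (2*K*b) - Real.sin (2*K*a))/(4*K) := by
    gcongr; linarith
  have d2 : (-2:ℝ)/(32*K) ≤ (Real.sin (4*K*b) - Real.sin (4*K*a))/(32*K) := by
    gcongr; linarith
  have hq : (-2:ℝ)/(4*K) + (-2:ℝ)/(32*K) = -(9/(16*K)) := by field_simp; ring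
  rw [e]; linarith

lemma cos_level_set_meas (K : ℝ) :
    MeasurableSet {t : ℝ | 1/2 ≤ |Real.cos (K*t)|} := by
  apply measurableSet_le measurable_const
  exact (continuous_abs.comp (Real.continuous_cos.comp
    (continuous_const.mul continuous_id))).measurable

lemma cos_level_measure (K a b : ℝ) (hK : 0 < K) (hab : a ≤ b) :
    ENNReal.ofReal (3/8*(b-a) - 9/(16*K) - (b-a)/16)
      ≤ volume {t ∈ Set.Icc a b | 1/2 ≤ |Real.cos (K*t)|} := by
  set s := {t ∈ Set.Icc a b | 1/2 ≤ |Real.cos (K*t)|} with hs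
  have hsm : MeasurableSet s := measurableSet_Icc.inter (cos_level_set_meas K)
  have hsub : s ⊆ Set.Icc a b := fun t ht => ht.1
  have hfin : volume s ≤ ENNReal.ofReal (b - a) := by
    calc volume s ≤ volume (Set.Icc a b) := measure_mono hsub
    _ = ENNReal.ofReal (b - a) := Real.volume_Icc
  have hslt : volume s < ⊤ := lt_of_le_of_lt hfin ENNReal.ofReal_lt_top
  have hcont : Continuous fun t : ℝ => Real.cos (K*t)^4 := by continuity
  have hintI : IntegrableOn (fun t : ℝ => Real.cos (K*t)^4) (Set.Icc a b) volume :=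
    hcont.integrableOn_Icc
  -- split the integral
  have hsplit : ∫ t in Set.Icc a b, Real.cos (K*t)^4
      = (∫ t in s, Real.cos (K*t)^4) + ∫ t in Set.Icc a b \ s, Real.cos (K*t)^4 := by
    rw [← setIntegral_union (Set.disjoint_sdiff_right) (measurableSet_Icc.diff hsm)
      (hintI.mono_set hsub) (hintI.mono_set Set.diff_subset),
      Set.union_diff_cancel hsub]
  have h1 : (∫ t in s, Real.cos (K*t)^4) ≤ (volume s).toReal := by
    have := norm_setIntegral_le_of_norm_le_const_ae' (f := fun t => Real.cos (K*t)^4) (C := 1) hslt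
      (Filter.Eventually.of_forall fun t (ht : t ∈ s) => by
        rw [Real.norm_eq_abs, abs_pow]
        calc |Real.cos (K*t)|^4 ≤ 1^4 :=
              pow_le_pow_left₀ (abs_nonneg _) (Real.abs_cos_le_one _) 4
        _ = 1 := by norm_num)
    calc (∫ t in s, Real.cos (K*t)^4) ≤ ‖∫ t in s, Real.cos (K*t)^4‖ := le_abs_self _
    _ ≤ 1 * (volume s).toReal := this
    _ = (volume s).toReal := one_mul _
  have h2 : (∫ t in Set.Icc a b \ s, Real.cos (K*t)^4) ≤ (1/16) * (b-a) := by
    have hb : (∫ t in Set.Icc a b \ s, Real.cos (K*t)^4)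
        ≤ (1/16) * (volume (Set.Icc a b \ s)).toReal := by
      have := norm_setIntegral_le_of_norm_le_const_ae' (f := fun t => Real.cos (K*t)^4) (C := 1/16)
        (lt_of_le_of_lt (measure_mono (Set.diff_subset)) (by rw [Real.volume_Icc]; exact ENNReal.ofReal_lt_top))
        (Filter.Eventually.of_forall fun t (ht : t ∈ Set.Icc a b \ s) => by
          have hlt : |Real.cos (K*t)| < 1/2 := by
            by_contra hc
            exact ht.2 ⟨ht.1, le_of_not_gt hc⟩
          rw [Real.norm_eq_abs, abs_pow]
          calc |Real.cos (K*t)|^4 ≤ (1/2)^4 :=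
                pow_le_pow_left₀ (abs_nonneg _) hlt.le 4
          _ ≤ 1/16 := by norm_num)
      calc (∫ t in Set.Icc a b \ s, Real.cos (K*t)^4)
          ≤ ‖∫ t in Set.Icc a b \ s, Real.cos (K*t)^4‖ := le_abs_self _
      _ ≤ (1/16) * (volume (Set.Icc a b \ s)).toReal := this
    have hm : (volume (Set.Icc a b \ s)).toReal ≤ b - a := by
      have : volume (Set.Icc a b \ s) ≤ ENNReal.ofReal (b-a) := by
        calc volume (Set.Icc a b \ s) ≤ volume (Set.Icc a b) := measure_mono Set.diff_subset
        _ = ENNReal.ofReal (b-a) := Real.volume_Icc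
      calc (volume (Set.Icc a b \ s)).toReal ≤ (ENNReal.ofReal (b-a)).toReal :=
            ENNReal.toReal_mono ENNReal.ofReal_ne_top this
      _ ≤ b - a := by
        rcases le_or_gt 0 (b-a) with h|h
        · rw [ENNReal.toReal_ofReal h]
        · rw [ENNReal.ofReal_of_nonpos h.le]; simpa using sub_nonneg.2 hab
    nlinarith [ENNReal.toReal_nonneg (a := volume (Set.Icc a b \ s))]
  have h3 : 3/8*(b-a) - 9/(16*K) ≤ ∫ t in Set.Icc a b, Real.cos (K*t)^4 := by
    rw [MeasureTheory.integral_Icc_eq_integral_Ioc, ← intervalIntegral.integral_of_le hab]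
    exact cos4_integral_lower K a b hK hab
  have hfinal : 3/8*(b-a) - 9/(16*K) - (b-a)/16 ≤ (volume s).toReal := by linarith [hsplit ▸ h3]
  exact ENNReal.ofReal_le_of_le_toReal hfinal

lemma abs_coord_le_norm (v : E2) (i : Fin 2) : |v i| ≤ ‖v‖ := by
  rw [EuclideanSpace.norm_eq, ← Real.sqrt_sq_eq_abs]
  apply Real.sqrt_le_sqrt
  calc v i ^ 2 = ‖v i‖ ^ 2 := by rw [Real.norm_eq_abs, sq_abs]
  _ ≤ ∑ j, ‖v j‖ ^ 2 := Finset.single_le_sum (f := fun j => ‖v j‖ ^ 2) (fun j _ => sq_nonneg _) (Finset.mem_univ i)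

lemma norm_xStarSign (xs : E2) (ε : Bool × Bool) : ‖xStarSign xs ε‖ = ‖xs‖ := by
  rw [EuclideanSpace.norm_eq, EuclideanSpace.norm_eq]
  congr 1
  rw [Fin.sum_univ_two, Fin.sum_univ_two]
  have h0 : xStarSign xs ε 0 = sgn ε.1 * xs 0 := rfl
  have h1 : xStarSign xs ε 1 = sgn ε.2 * xs 1 := rfl
  rw [h0, h1]
  have hs : ∀ b : Bool, |sgn b| = 1 := by intro b; cases b <;> simp [sgn]
  simp only [Real.norm_eq_abs, abs_mul, hs, one_mul]

lemma xStarSign_tt (xs : E2) : xStarSign xs (true, true) = xs := by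
  ext i
  fin_cases i <;> simp [xStarSign, vec2, sgn]

lemma hasFDerivAt_sin_coord (C K : ℝ) (x : E2) :
    HasFDerivAt (fun y : E2 => C * Real.sin (K * y 0))
      ((C * (Real.cos (K * x 0) * K)) • (EuclideanSpace.proj (0 : Fin 2) : E2 →L[ℝ] ℝ)) x := by
  have hL : HasFDerivAt (fun y : E2 => y 0)
      (EuclideanSpace.proj (0 : Fin 2) : E2 →L[ℝ] ℝ) x :=
    (EuclideanSpace.proj (0 : Fin 2) : E2 →L[ℝ] ℝ).hasFDerivAt
  have hsin : HasDerivAt (fun t : ℝ => Real.sin (K * t)) (Real.cos (K * x 0) * K) (x 0) := by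
    have h1 : HasDerivAt (fun t : ℝ => K * t) K (x 0) := by
      simpa using (hasDerivAt_id (x 0)).const_mul K
    exact (Real.hasDerivAt_sin (K * x 0)).comp (x 0) h1
  have := (hsin.comp_hasFDerivAt x hL).const_mul C
  simpa [smul_smul] using this

lemma pd_sin_coord (C K : ℝ) (x : E2) :
    fderiv ℝ (fun y : E2 => C * Real.sin (K * y 0)) x (EuclideanSpace.single (0 : Fin 2) 1)
      = C * (Real.cos (K * x 0) * K) := by
  rw [(hasFDerivAt_sin_coord C K x).fderiv]
  simp [EuclideanSpace.single_apply]

lemma volume_prod_set (s1 s2 : Set ℝ) (h1 : MeasurableSet s1) (h2 : MeasurableSet s2) :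
    volume {x : E2 | x 0 ∈ s1 ∧ x 1 ∈ s2} = volume s1 * volume s2 := by
  have he := EuclideanSpace.volume_preserving_symm_measurableEquiv_toLp (Fin 2)
  set S : Set (Fin 2 → ℝ) := Set.pi Set.univ ![s1, s2] with hS
  have hSm : MeasurableSet S := MeasurableSet.univ_pi (by
    intro i; fin_cases i <;> simpa)
  have hpre : (MeasurableEquiv.toLp 2 (Fin 2 → ℝ)).symm ⁻¹' S
      = {x : E2 | x 0 ∈ s1 ∧ x 1 ∈ s2} := by
    ext x
    simp only [Set.mem_preimage, hS, Set.mem_pi, Set.mem_univ, forall_true_left,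
      Set.mem_setOf_eq, Fin.forall_fin_two]
    rfl
  rw [← hpre, he.measure_preimage hSm.nullMeasurableSet, hS, volume_pi_pi]
  rw [Fin.prod_univ_two]
  simp

set_option maxHeartbeats 1000000 in
/-- Let `n ∈ ℤ₊`, `λ = 3n`, `k = λ² = 9n²`, `2 ≤ p ≤ 3`, `M > 0`,
`δ > 0`.  Let `x* = (x₁*, x₂*)` with positive coordinates and `2/λ < min(δ, x₁*, x₂*)`,
and let `g` be `C¹` with `|∂₂g| > M` on `B(x*, δ)` and `∂₂g` bounded on `B(x*, 2)`.
Then `‖(∂₁β_{k,λ})·(∂₂g)‖_{Lᵖ} ≥ c M k^{1/2} λ⁻¹ − k^{-1/2} ‖∂₁ρ‖_{Lᵖ(B(0,2))} ·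
sup_{x ∈ B(x*,2)} |∂₂g(x)|`, where `c > 0` is an absolute constant. -/
theorem beta_main_term_lower_bound :
    ∃ c > 0,
      ∀ n : ℕ, 0 < n → ∀ p : ℝ, 2 ≤ p → p ≤ 3 → ∀ M : ℝ, 0 < M → ∀ δ : ℝ, 0 < δ →
        ∀ xs : E2, 0 < xs 0 → 0 < xs 1 →
          2 / (3 * (n : ℝ)) < δ → 2 / (3 * (n : ℝ)) < xs 0 → 2 / (3 * (n : ℝ)) < xs 1 →
          ∀ ρ : E2 → ℝ,
            ContDiff ℝ (⊤ : ℕ∞) ρ →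
            (∀ x, 0 ≤ ρ x) → (∀ x, ρ x ≤ 1) →
            tsupport ρ ⊆ Metric.ball 0 2 →
            (∀ x ∈ Metric.ball (0 : E2) 1, ρ x = 1) →
            ∀ g : E2 → ℝ, ContDiff ℝ 1 g →
              (∀ x ∈ Metric.ball xs δ, M < |pd g x 1|) →
              (∃ B : ℝ, ∀ x ∈ Metric.ball xs 2, |pd g x 1| ≤ B) →
              c * M * Real.sqrt ((9 * n ^ 2 : ℕ) : ℝ) / (3 * (n : ℝ)) -
                  (Real.sqrt ((9 * n ^ 2 : ℕ) : ℝ))⁻¹ *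
                    (eLpNorm (fun x => pd ρ x 0) (ENNReal.ofReal p)
                      (volume.restrict (Metric.ball (0 : E2) 2))).toReal *
                    (⨆ x : (Metric.ball xs 2), |pd g x 1|)
                ≤ (eLpNorm
                    (fun x => pd (betaKL xs ρ (9 * n ^ 2) (3 * (n : ℝ)) p) x 0 * pd g x 1)
                    (ENNReal.ofReal p) volume).toReal := by
  refine ⟨1/6, by norm_num, ?_⟩
  intro n hn p hp2 hp3 M hM δ hδ xs hxs0 hxs1 hδl hx0l hx1l ρ hρ hρ0 hρ1 hρsupp hρball
    g hg hgM hgB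
  set l : ℝ := 3 * (n : ℝ) with hl
  clear_value l
  have hn1 : (1:ℝ) ≤ (n : ℝ) := by exact_mod_cast hn
  have hl3 : (3:ℝ) ≤ l := by rw [hl]; linarith
  have hl0 : (0:ℝ) < l := by linarith
  have hp0 : (0:ℝ) < p := by linarith
  have hkl : ((9 * n ^ 2 : ℕ) : ℝ) = l ^ 2 := by push_cast [hl]; ring
  have hsq : Real.sqrt ((9 * n ^ 2 : ℕ) : ℝ) = l := by
    rw [hkl]; exact Real.sqrt_sq hl0.le
  set β := betaKL xs ρ (9 * n ^ 2) l p with hβdef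
  set Co := l ^ (-1 + 2/p) / l with hCo
  have hCo0 : 0 < Co := div_pos (Real.rpow_pos_of_pos hl0 _) hl0
  -- local identity for β near xs
  have hlocal : ∀ y ∈ Metric.ball xs (1/l), β y = Co * Real.sin (l^2 * y 0) := by
    intro y hy
    have hynorm : ‖y - xs‖ < 1/l := by
      rw [← dist_eq_norm]; exact hy
    have hTT : ρ (l • (y - xStarSign xs (true, true))) = 1 := by
      apply hρball
      rw [mem_ball_zero_iff, xStarSign_tt, norm_smul, Real.norm_eq_abs, abs_of_pos hl0]
      calc l * ‖y - xs‖ < l * (1/l) := by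
            exact mul_lt_mul_of_pos_left hynorm hl0
      _ = 1 := by field_simp
    have hzero : ∀ ε : Bool × Bool, ε ≠ (true, true) →
        ρ (l • (y - xStarSign xs ε)) = 0 := by
      intro ε hε
      apply image_eq_zero_of_notMem_tsupport
      intro hmem
      have h2 := mem_ball_zero_iff.1 (hρsupp hmem)
      -- distance from xs to the reflected point is large
      have hcoord : 4/l < ‖xs - xStarSign xs ε‖ := by
        have hcases : ε.1 = false ∨ ε.2 = false := by
          rcases ε with ⟨e1, e2⟩
          cases e1 <;> cases e2 <;> simp_all
        rcases hcases with h | h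
        · have hc : (xs - xStarSign xs ε) 0 = 2 * xs 0 := by
            have : xStarSign xs ε 0 = sgn ε.1 * xs 0 := rfl
            have hv : (xs - xStarSign xs ε) 0 = xs 0 - xStarSign xs ε 0 := rfl
            rw [hv, this, h]
            simp [sgn]; ring
          calc 4/l < 2 * xs 0 := by
                have h42 : (4:ℝ)/l = 2*(2/l) := by ring
                linarith
          _ ≤ |(xs - xStarSign xs ε) 0| := by
              rw [hc, abs_of_pos (by linarith)]
          _ ≤ ‖xs - xStarSign xs ε‖ := abs_coord_le_norm _ 0
        · have hc : (xs - xStarSign xs ε) 1 = 2 * xs 1 := by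
            have : xStarSign xs ε 1 = sgn ε.2 * xs 1 := rfl
            have hv : (xs - xStarSign xs ε) 1 = xs 1 - xStarSign xs ε 1 := rfl
            rw [hv, this, h]
            simp [sgn]; ring
          calc 4/l < 2 * xs 1 := by
                have h42 : (4:ℝ)/l = 2*(2/l) := by ring
                linarith
          _ ≤ |(xs - xStarSign xs ε) 1| := by
              rw [hc, abs_of_pos (by linarith)]
          _ ≤ ‖xs - xStarSign xs ε‖ := abs_coord_le_norm _ 1
      have htri : ‖xs - xStarSign xs ε‖ ≤ ‖xs - y‖ + ‖y - xStarSign xs ε‖ :=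
        norm_sub_le_norm_sub_add_norm_sub _ _ _
      have hrev : ‖xs - y‖ = ‖y - xs‖ := norm_sub_rev _ _
      have hfar : 3/l < ‖y - xStarSign xs ε‖ := by
        have h4 : 4/l = 1/l + 3/l := by ring
        linarith
      have : ‖l • (y - xStarSign xs ε)‖ > 3 := by
        rw [norm_smul, Real.norm_eq_abs, abs_of_pos hl0]
        calc (3:ℝ) = l * (3/l) := by field_simp
        _ < l * ‖y - xStarSign xs ε‖ := mul_lt_mul_of_pos_left hfar hl0
      linarith
    rw [hβdef]
    unfold betaKL
    rw [hsq, Fintype.sum_prod_type, Fintype.sum_bool]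
    rw [Fintype.sum_bool, Fintype.sum_bool]
    rw [hTT]
    rw [hzero (true, false) (by simp), hzero (false, true) (by simp),
      hzero (false, false) (by simp)]
    rw [hkl]
    simp only [sgn]
    norm_num
    exact Or.inl hCo.symm
  have hpdβ : ∀ y ∈ Metric.ball xs (1/l), pd β y 0 = Co * (Real.cos (l^2 * y 0) * l^2) := by
    intro x hx
    have hev : β =ᶠ[nhds x] (fun y : E2 => Co * Real.sin (l^2 * y 0)) := by
      filter_upwards [Metric.isOpen_ball.mem_nhds hx] with y hy using hlocal y hy
    unfold pd
    rw [Filter.EventuallyEq.fderiv_eq hev]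
    exact pd_sin_coord Co (l^2) x
  -- the sets
  set s1 := {t ∈ Set.Icc (xs 0 - 1/(2*l)) (xs 0 + 1/(2*l)) | 1/2 ≤ |Real.cos (l^2 * t)|}
    with hs1
  set J := Set.Icc (xs 1 - 1/(2*l)) (xs 1 + 1/(2*l)) with hJ
  set A := {x : E2 | x 0 ∈ s1 ∧ x 1 ∈ J} with hA
  have hs1m : MeasurableSet s1 := measurableSet_Icc.inter (cos_level_set_meas (l^2))
  have hJm : MeasurableSet J := measurableSet_Icc
  have hAsub : A ⊆ Metric.ball xs (1/l) := by
    intro x hx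
    have h0 : |x 0 - xs 0| ≤ 1/(2*l) := by
      have := hx.1.1
      rw [Set.mem_Icc] at this
      rw [abs_le]; constructor <;> linarith [this.1, this.2]
    have h1 : |x 1 - xs 1| ≤ 1/(2*l) := by
      have := hx.2
      rw [hJ, Set.mem_Icc] at this
      rw [abs_le]; constructor <;> linarith [this.1, this.2]
    rw [Metric.mem_ball, EuclideanSpace.dist_eq, Fin.sum_univ_two]
    rw [Real.dist_eq, Real.dist_eq]
    rw [Real.sqrt_lt' (by positivity)]
    have e0 : |x 0 - xs 0|^2 ≤ (1/(2*l))^2 := by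
      apply pow_le_pow_left₀ (abs_nonneg _) h0
    have e1 : |x 1 - xs 1|^2 ≤ (1/(2*l))^2 := by
      apply pow_le_pow_left₀ (abs_nonneg _) h1
    have hflip : (1/(2*l))^2 + (1/(2*l))^2 < (1/l)^2 := by
      rw [div_pow, div_pow, ← add_div, div_lt_div_iff₀ (by positivity) (by positivity)]
      ring_nf
      nlinarith [sq_nonneg l]
    linarith
  have hAm : MeasurableSet A := by
    have : A = (fun x : E2 => x 0) ⁻¹' s1 ∩ (fun x : E2 => x 1) ⁻¹' J := rfl
    rw [this]
    have m0 : Measurable fun x : E2 => x 0 :=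
      (EuclideanSpace.proj (0 : Fin 2) : E2 →L[ℝ] ℝ).continuous.measurable
    have m1 : Measurable fun x : E2 => x 1 :=
      (EuclideanSpace.proj (1 : Fin 2) : E2 →L[ℝ] ℝ).continuous.measurable
    exact (m0 hs1m).inter (m1 hJm)
  have hvolA : volume A = volume s1 * volume J := volume_prod_set s1 J hs1m hJm
  have hvolJ : volume J = ENNReal.ofReal (1/l) := by
    rw [hJ, Real.volume_Icc]; congr 1; ring
  have hvols1 : ENNReal.ofReal (1/(8*l)) ≤ volume s1 := by
    have hba : (xs 0 + 1/(2*l)) - (xs 0 - 1/(2*l)) = 1/l := by ring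
    have h := cos_level_measure (l^2) (xs 0 - 1/(2*l)) (xs 0 + 1/(2*l))
      (by positivity) (by linarith [show (0:ℝ) < 1/(2*l) by positivity])
    rw [hba] at h
    refine le_trans ?_ h
    apply ENNReal.ofReal_le_ofReal
    have hkey : 3/8*(1/l) - 9/(16*(l^2)) - (1/l)/16 - 1/(8*l) = 3*(l-3)/(16*l^2) := by
      field_simp; ring
    have hpos : 0 ≤ 3*(l-3)/(16*l^2) := by
      apply div_nonneg (by linarith) (by positivity)
    linarith
  have hvolA_lb : ENNReal.ofReal (1/(8*l^2)) ≤ volume A := by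
    rw [hvolA, hvolJ]
    calc ENNReal.ofReal (1/(8*l^2)) = ENNReal.ofReal ((1/(8*l)) * (1/l)) := by
          congr 1; field_simp
    _ = ENNReal.ofReal (1/(8*l)) * ENNReal.ofReal (1/l) :=
          ENNReal.ofReal_mul (by positivity)
    _ ≤ volume s1 * ENNReal.ofReal (1/l) := by gcongr
  have hvolA_fin : volume A ≠ ⊤ := by
    rw [hvolA, hvolJ]
    exact ENNReal.mul_ne_top
      (ne_top_of_le_ne_top ENNReal.ofReal_ne_top
        (le_trans (measure_mono (fun t ht => ht.1)) (le_of_eq Real.volume_Icc)))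
      ENNReal.ofReal_ne_top
  -- the constant
  set a := M * l ^ (2/p) / 2 with ha
  have haCo : Co * l^2 = l ^ (2/p) := by
    have key : l ^ (-1 + 2/p) * l = l ^ (2/p) := by
      calc l ^ (-1 + 2/p) * l = l ^ (-1 + 2/p) * l ^ (1:ℝ) := by rw [Real.rpow_one]
      _ = l ^ (-1 + 2/p + 1) := (Real.rpow_add hl0 _ _).symm
      _ = l ^ (2/p) := by norm_num
    rw [hCo, ← key]
    field_simp
  have ha0 : 0 < a := by
    have := Real.rpow_pos_of_pos hl0 (2/p); positivity
  -- pointwise lower bound on A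
  have hpoint : ∀ x ∈ A, a ≤ |pd β x 0 * pd g x 1| := by
    intro x hx
    have hxball : x ∈ Metric.ball xs (1/l) := hAsub hx
    have hxδ : x ∈ Metric.ball xs δ := by
      apply Metric.ball_subset_ball _ hxball
      have h12 : 1/l < 2/l := div_lt_div_of_pos_right (by norm_num) hl0
      linarith
    have h1 : |pd β x 0| = Co * l^2 * |Real.cos (l^2 * x 0)| := by
      rw [hpdβ x hxball, abs_mul, abs_mul]
      rw [abs_of_pos hCo0, abs_of_pos (by positivity : (0:ℝ) < l^2)]
      ring
    have hcos : 1/2 ≤ |Real.cos (l^2 * x 0)| := hx.1.2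
    have hgx : M ≤ |pd g x 1| := (hgM x hxδ).le
    rw [abs_mul]
    calc a = (l ^ (2/p) * (1/2)) * M := by rw [ha]; ring
    _ ≤ |pd β x 0| * |pd g x 1| := by
        apply mul_le_mul _ hgx hM.le (abs_nonneg _)
        rw [h1]
        have hCl : 0 < Co * l^2 := by positivity
        have step1 : l ^ (2/p) * (1/2) = Co * l^2 * (1/2) := by rw [haCo]
        rw [step1]
        exact mul_le_mul_of_nonneg_left hcos hCl.le
  -- L^p machinery
  set P := ENNReal.ofReal p with hPdef
  have hP0 : P ≠ 0 := by
    rw [hPdef]; simp only [ne_eq, ENNReal.ofReal_eq_zero, not_le]; linarith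
  have hPt : P ≠ ⊤ := ENNReal.ofReal_ne_top
  have hPr : P.toReal = p := ENNReal.toReal_ofReal hp0.le
  set f := fun x : E2 => pd β x 0 * pd g x 1 with hfdef
  have hβsm : ContDiff ℝ (⊤ : ℕ∞) β := by
    rw [hβdef]
    unfold betaKL
    apply ContDiff.mul contDiff_const
    apply ContDiff.sum
    intro ε _
    have hproj : ContDiff ℝ (⊤ : ℕ∞) fun x : E2 => x 0 :=
      (EuclideanSpace.proj (0 : Fin 2) : E2 →L[ℝ] ℝ).contDiff
    have hsin : ContDiff ℝ (⊤ : ℕ∞) fun x : E2 => Real.sin (((9 * n ^ 2 : ℕ) : ℝ) * x 0) :=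
      Real.contDiff_sin.comp (contDiff_const.mul hproj)
    have hρc : ContDiff ℝ (⊤ : ℕ∞) fun x : E2 => ρ (l • (x - xStarSign xs ε)) :=
      hρ.comp ((contDiff_id.sub contDiff_const).const_smul l)
    exact (contDiff_const.mul hρc).mul hsin
  have hcont_f : Continuous f := by
    rw [hfdef]
    have hc1 : Continuous fun x : E2 => pd β x 0 := by
      simp only [pd]
      exact (hβsm.continuous_fderiv (by simp)).clm_apply continuous_const
    have hc2 : Continuous fun x : E2 => pd g x 1 := by
      simp only [pd]
      exact (hg.continuous_fderiv (by simp)).clm_apply continuous_const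
    exact hc1.mul hc2
  have hcs : HasCompactSupport f := by
    have hβ0 : ∀ y : E2, ‖xs‖ + 1 < ‖y‖ → β y = 0 := by
      intro y hy
      have hz : ∀ ε : Bool × Bool, ρ (l • (y - xStarSign xs ε)) = 0 := by
        intro ε
        apply image_eq_zero_of_notMem_tsupport
        intro hmem
        have h2 := mem_ball_zero_iff.1 (hρsupp hmem)
        have hn' : 1 ≤ ‖y - xStarSign xs ε‖ := by
          have htri := norm_sub_norm_le y (xStarSign xs ε)
          rw [norm_xStarSign] at htri
          linarith
        have : (3:ℝ) ≤ ‖l • (y - xStarSign xs ε)‖ := by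
          rw [norm_smul, Real.norm_eq_abs, abs_of_pos hl0]
          calc (3:ℝ) = 3 * 1 := by ring
          _ ≤ l * ‖y - xStarSign xs ε‖ :=
              mul_le_mul hl3 hn' (by norm_num) (by linarith)
        linarith
      rw [hβdef]
      unfold betaKL
      simp [hz]
    have hfd : ∀ y : E2, ‖xs‖ + 1 < ‖y‖ → fderiv ℝ β y = 0 := by
      intro y hy
      have hopen : IsOpen {z : E2 | ‖xs‖ + 1 < ‖z‖} :=
        isOpen_lt continuous_const continuous_norm
      have hev : β =ᶠ[nhds y] fun _ => (0:ℝ) := by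
        filter_upwards [hopen.mem_nhds hy] with z hz using hβ0 z hz
      rw [Filter.EventuallyEq.fderiv_eq hev]
      exact fderiv_const_apply 0
    apply HasCompactSupport.intro (isCompact_closedBall (0 : E2) (‖xs‖ + 1))
    intro x hx
    have hxn : ‖xs‖ + 1 < ‖x‖ := by
      by_contra hc
      exact hx (by
        rw [Metric.mem_closedBall, dist_zero_right]
        linarith [not_lt.1 hc])
    rw [hfdef]
    show pd β x 0 * pd g x 1 = 0
    unfold pd
    rw [hfd x hxn]
    simp
  have hmem : MemLp f P volume := hcont_f.memLp_of_hasCompactSupport hcs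
  have hfin : eLpNorm f P volume ≠ ⊤ := hmem.eLpNorm_ne_top
  have hmono : eLpNorm (A.indicator fun _ => a) P volume ≤ eLpNorm f P volume := by
    apply eLpNorm_mono
    intro x
    rw [Real.norm_eq_abs, Real.norm_eq_abs]
    by_cases hx : x ∈ A
    · rw [Set.indicator_of_mem hx, abs_of_pos ha0]
      exact hpoint x hx
    · rw [Set.indicator_of_notMem hx]; simp [abs_nonneg]
  have hind : eLpNorm (A.indicator fun _ => a) P volume = ‖a‖₊ * volume A ^ (1/p) := by
    rw [eLpNorm_indicator_const hAm hP0 hPt, hPr]; rfl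
  have hkey : a * (volume A).toReal ^ (1/p) ≤ (eLpNorm f P volume).toReal := by
    have h1 : (‖a‖₊ * volume A ^ (1/p) : ℝ≥0∞).toReal
        = a * (volume A).toReal ^ (1/p) := by
      rw [ENNReal.toReal_mul, ENNReal.toReal_rpow]
      congr 1
      simp [Real.norm_eq_abs, abs_of_pos ha0]
    rw [← h1, ← hind]
    exact ENNReal.toReal_mono hfin hmono
  -- final arithmetic
  have hvolA_real : 1/(8*l^2) ≤ (volume A).toReal := by
    have := ENNReal.toReal_mono hvolA_fin hvolA_lb
    rwa [ENNReal.toReal_ofReal (by positivity)] at this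
  have hM6 : M/6 ≤ a * (volume A).toReal ^ (1/p) := by
    have h1p : (0:ℝ) < 1/p := by positivity
    have hr : (1/(8*l^2)) ^ (1/p) ≤ (volume A).toReal ^ (1/p) :=
      Real.rpow_le_rpow (by positivity) hvolA_real h1p.le
    have h2p : ((l:ℝ)^2) ^ ((1:ℝ)/p) = l ^ (2/p) := by
      rw [← Real.rpow_natCast l 2, ← Real.rpow_mul hl0.le]
      congr 1
      push_cast
      ring
    have h8 : ((1:ℝ)/(8*l^2))^((1:ℝ)/p) = ((8:ℝ)^((1:ℝ)/p) * l^(2/p))⁻¹ := by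
      rw [one_div, Real.inv_rpow (by positivity),
        Real.mul_rpow (by norm_num) (by positivity), h2p]
    have hlp : (0:ℝ) < l ^ (2/p) := Real.rpow_pos_of_pos hl0 _
    have h8p : (0:ℝ) < (8:ℝ)^((1:ℝ)/p) := Real.rpow_pos_of_pos (by norm_num) _
    have key : a * (1/(8*l^2))^((1:ℝ)/p) = M/2 * ((8:ℝ)^((1:ℝ)/p))⁻¹ := by
      rw [ha, h8]
      field_simp
    have h8b : (8:ℝ)^((1:ℝ)/p) ≤ 3 := by
      calc (8:ℝ)^((1:ℝ)/p) ≤ (8:ℝ)^((1:ℝ)/2) := by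
            apply Real.rpow_le_rpow_of_exponent_le (by norm_num)
            apply one_div_le_one_div_of_le (by norm_num) hp2
      _ ≤ 3 := by
          rw [← Real.sqrt_eq_rpow]
          nlinarith [Real.sq_sqrt (show (0:ℝ) ≤ 8 by norm_num), Real.sqrt_nonneg 8]
    have hinv : (1:ℝ)/3 ≤ ((8:ℝ)^((1:ℝ)/p))⁻¹ := by
      rw [one_div]
      exact inv_anti₀ (Real.rpow_pos_of_pos (by norm_num) _) h8b
    calc M/6 = M/2 * (1/3) := by ring
    _ ≤ M/2 * ((8:ℝ)^((1:ℝ)/p))⁻¹ :=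
        mul_le_mul_of_nonneg_left hinv (by positivity)
    _ = a * (1/(8*l^2))^((1:ℝ)/p) := key.symm
    _ ≤ a * (volume A).toReal ^ (1/p) := mul_le_mul_of_nonneg_left hr ha0.le
  have hT : 0 ≤ (Real.sqrt ((9 * n ^ 2 : ℕ) : ℝ))⁻¹ *
      (eLpNorm (fun x => pd ρ x 0) (ENNReal.ofReal p)
        (volume.restrict (Metric.ball (0 : E2) 2))).toReal *
      (⨆ x : (Metric.ball xs 2), |pd g x 1|) := by
    apply mul_nonneg (mul_nonneg (by positivity) ENNReal.toReal_nonneg)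
    exact Real.iSup_nonneg fun x => abs_nonneg _
  have hlhs : 1/6 * M * Real.sqrt ((9 * n ^ 2 : ℕ) : ℝ) / l = M/6 := by
    rw [hsq]
    field_simp
  calc 1/6 * M * Real.sqrt ((9 * n ^ 2 : ℕ) : ℝ) / l -
        (Real.sqrt ((9 * n ^ 2 : ℕ) : ℝ))⁻¹ *
          (eLpNorm (fun x => pd ρ x 0) (ENNReal.ofReal p)
            (volume.restrict (Metric.ball (0 : E2) 2))).toReal *
          (⨆ x : (Metric.ball xs 2), |pd g x 1|)
      ≤ M/6 := by rw [hlhs]; linarith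
  _ ≤ a * (volume A).toReal ^ (1/p) := hM6
  _ ≤ (eLpNorm f P volume).toReal := hkey

end
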